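/- arXiv:1904.03840 — 2 statements merged into one kernel-verified Lean document; each statement's English description precedes it below -/
import Mathlib

section
/- Let l ≥ 3, d ≥ 1, and W(l,d) the Wilson monoid of M(l,d). The set I = {f ∈ W(l,d) : |f(L ∩ Dom(f))| ≤ 1} is a prime ideal of W(l,d): it is closed under left and right multiplication by arbitrary elements of W(l,d), and whenever a product of two elements of W(l,d) lies in I, one of the factors lies in I. -/
/-- A subsystem of a pairwise balanced design. -/
def Subsys {S : Type*} (L : Set (Set S)) (X : Set S) : Prop :=
  ∀ x ∈ X, ∀ y ∈ X, x ≠ y → ∀ B ∈ L, x ∈ B → y ∈ B → B ⊆ X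

/-- The domain of a partial function. -/
def pDom {S T : Type*} (f : S → Option T) : Set S := {x | f x ≠ none}

/-- The image of a partial function. -/
def pIm {S T : Type*} (f : S → Option T) : Set T := {y | ∃ x, f x = some y}

/-- Image of a set under a partial function (only defined points count). -/
def imOn {S T : Type*} (f : S → Option T) (B : Set S) : Set T :=
  {y | ∃ x ∈ B, f x = some y}

/-- Composition of partial functions: first `f`, then `g`. -/
def pComp {S T U : Type*} (g : T → Option U) (f : S → Option T) : S → Option U :=
  fun x => (f x).bind g

/-- The blocks of the PBD `M(l,d)`: the set `L` of size `l`, together with all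
two-element sets having at least one point outside `L` (these are exactly the
pairs `{i, j}` with `l + 1 ≤ j ≤ l + d`, `i < j`). -/
def MldBlocks {V : Type*} (L : Set V) : Set (Set V) :=
  {L} ∪ {B | ∃ x y : V, x ≠ y ∧ (x ∉ L ∨ y ∉ L) ∧ B = {x, y}}

/-- The open sets of `M(l,d)`: subsets of `D = Lᶜ`, and sets containing at
least `l - 1` points of `L`. -/
def OpenMld {V : Type*} (L : Set V) (l : ℕ) (X : Set V) : Prop :=
  X ⊆ Lᶜ ∨ l - 1 ≤ (L ∩ X).ncard

/-- The restriction of the partial function `f` to `L` is a permutation of `L`. -/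
def PermOnL {V : Type*} (L : Set V) (f : V → Option V) : Prop :=
  (∀ x ∈ L, ∃ y ∈ L, f x = some y) ∧
  (∀ x ∈ L, ∀ y ∈ L, f x = f y → x = y) ∧
  (∀ y ∈ L, ∃ x ∈ L, f x = some y)

/-- Membership in the Wilson monoid `W(l,d)` (characterization): open domain,
and either `|f(L ∩ Dom f)| ≤ 1`, or `L ⊆ Dom f` and `f` restricted to `L` is a
permutation of `L`. -/
def MemW {V : Type*} (L : Set V) (l : ℕ) (f : V → Option V) : Prop :=
  OpenMld L l (pDom f) ∧
    ((imOn f L).ncard ≤ 1 ∨ (L ⊆ pDom f ∧ PermOnL L f))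

/-!
Composition never enlarges the image of `L`: `imOn (g ∘ f) L = imOn g (imOn f L)`. So a product
with a factor collapsing `L` to at most one point collapses it as well, while a product of two
permutations of `L` has image all of `L`, which has `l ≥ 3` points.

It remains to see that the domain of such a product is open. Openness of `X` only depends on
`|L ∩ X|`. If `f` is constant on `L ∩ Dom f`, then `g` is defined either nowhere or everywhere
on its image, so `L ∩ Dom (g ∘ f)` is empty or equal to `L ∩ Dom f`; and if `g` permutes `L`, it
maps `L ∩ Dom (f ∘ g)` bijectively onto `L ∩ Dom f`.
-/

section PartialFunctions

variable {S T U : Type*}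

lemma imOn_eq_preimage_image (f : S → Option T) (A : Set S) :
    imOn f A = Option.some ⁻¹' (f '' A) :=
  rfl

lemma Set.Finite.imOn {A : Set S} (hA : A.Finite) (f : S → Option T) : (imOn f A).Finite := by
  rw [imOn_eq_preimage_image]
  exact (hA.image f).preimage (Option.some_injective _).injOn

lemma ncard_imOn_le (f : S → Option T) {A : Set S} (hA : A.Finite) :
    (imOn f A).ncard ≤ A.ncard :=
  calc (imOn f A).ncard ≤ (f '' A).ncard :=
        Set.ncard_le_ncard_of_injOn Option.some (fun _ hy => hy)
          (Option.some_injective _).injOn (hA.image f)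
    _ ≤ A.ncard := Set.ncard_image_le hA

lemma ncard_imOn_of_injOn {f : S → Option T} {A : Set S} (hdef : A ⊆ pDom f)
    (hinj : A.InjOn f) : (imOn f A).ncard = A.ncard := by
  have hrange : f '' A ⊆ Set.range Option.some := by
    rintro _ ⟨x, hx, rfl⟩
    exact Option.ne_none_iff_exists.mp (hdef hx)
  rw [imOn_eq_preimage_image, Set.ncard_preimage_of_injective_subset_range
    (Option.some_injective _) hrange, hinj.ncard_image]

lemma imOn_pComp (g : T → Option U) (f : S → Option T) (A : Set S) :
    imOn (pComp g f) A = imOn g (imOn f A) := by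
  ext z
  constructor
  · rintro ⟨x, hx, hxz⟩
    rcases hfx : f x with _ | y
    · simp [pComp, hfx] at hxz
    · exact ⟨y, ⟨x, hx, hfx⟩, by simpa [pComp, hfx] using hxz⟩
  · rintro ⟨y, ⟨x, hx, hfx⟩, hyz⟩
    exact ⟨x, hx, by simp [pComp, hfx, hyz]⟩

lemma ncard_imOn_pComp_le (g : T → Option U) (f : S → Option T) {A : Set S}
    (hA : A.Finite) : (imOn (pComp g f) A).ncard ≤ (imOn f A).ncard := by
  rw [imOn_pComp]
  exact ncard_imOn_le g (hA.imOn f)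

lemma pDom_pComp_subset (g : T → Option U) (f : S → Option T) : pDom (pComp g f) ⊆ pDom f :=
  fun x hx hfx => hx (by simp [pComp, hfx])

lemma inter_pDom_pComp_eq_empty_or_eq (g : T → Option U) {f : S → Option T} {A : Set S}
    (hf : (imOn f A).Subsingleton) :
    A ∩ pDom (pComp g f) = ∅ ∨ A ∩ pDom (pComp g f) = A ∩ pDom f := by
  by_contra! h
  obtain ⟨⟨x, hxA, hx⟩, hne⟩ := h
  obtain ⟨y, hfy⟩ := Option.ne_none_iff_exists'.mp (pDom_pComp_subset g f hx)
  refine hne (Set.Subset.antisymm (Set.inter_subset_inter_right A (pDom_pComp_subset g f)) ?_)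
  rintro x' ⟨hx'A, hx'⟩
  obtain ⟨y', hfy'⟩ := Option.ne_none_iff_exists'.mp hx'
  have hyy' : y' = y := hf ⟨x', hx'A, hfy'⟩ ⟨x, hxA, hfy⟩
  refine ⟨hx'A, fun h => hx ?_⟩
  simpa [pComp, hfy, hfy', hyy'] using h

end PartialFunctions

section PermOnL

variable {V : Type*} {L : Set V} {g : V → Option V}

lemma PermOnL.imOn_eq (hg : PermOnL L g) : imOn g L = L := by
  refine Set.Subset.antisymm ?_ fun y hy => hg.2.2 y hy
  rintro y ⟨x, hx, hgx⟩
  obtain ⟨y', hy', hgy'⟩ := hg.1 x hx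
  rw [hgx, Option.some_inj] at hgy'
  exact hgy' ▸ hy'

lemma PermOnL.imOn_pComp (hg : PermOnL L g) (f : V → Option V) :
    imOn (pComp f g) L = imOn f L := by
  rw [_root_.imOn_pComp, hg.imOn_eq]

lemma PermOnL.imOn_inter_pDom_pComp (hg : PermOnL L g) (f : V → Option V) :
    imOn g (L ∩ pDom (pComp f g)) = L ∩ pDom f := by
  ext y
  constructor
  · rintro ⟨x, ⟨hxL, hx⟩, hgx⟩
    refine ⟨hg.imOn_eq ▸ ⟨x, hxL, hgx⟩, fun hfy => hx ?_⟩
    simp [pComp, hgx, hfy]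
  · rintro ⟨hyL, hy⟩
    obtain ⟨x, hxL, hgx⟩ := hg.2.2 y hyL
    exact ⟨x, ⟨hxL, by simpa [pDom, pComp, hgx] using hy⟩, hgx⟩

lemma PermOnL.ncard_inter_pDom_pComp (hg : PermOnL L g) (f : V → Option V) :
    (L ∩ pDom (pComp f g)).ncard = (L ∩ pDom f).ncard := by
  have hdef : L ⊆ pDom g := fun x hx => by
    obtain ⟨y, -, hgx⟩ := hg.1 x hx
    simp [pDom, hgx]
  rw [← hg.imOn_inter_pDom_pComp f, ncard_imOn_of_injOn (Set.inter_subset_left.trans hdef)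
    fun x hx y hy => hg.2.1 x hx.1 y hy.1]

end PermOnL

section OpenMld

variable {V : Type*} {L : Set V} {l : ℕ} {f g : V → Option V}

lemma openMld_iff_ncard (hL : L.Finite) {X : Set V} :
    OpenMld L l X ↔ (L ∩ X).ncard = 0 ∨ l - 1 ≤ (L ∩ X).ncard := by
  rw [OpenMld, Set.ncard_eq_zero (hL.subset Set.inter_subset_left),
    Set.subset_compl_iff_disjoint_left, Set.disjoint_iff_inter_eq_empty]

lemma OpenMld.pComp_of_subsingleton (hL : L.Finite) (hf : (imOn f L).Subsingleton)
    (ho : OpenMld L l (pDom f)) (g : V → Option V) : OpenMld L l (pDom (pComp g f)) := by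
  rw [openMld_iff_ncard hL] at ho ⊢
  rcases inter_pDom_pComp_eq_empty_or_eq g hf with h | h <;> rw [h]
  · exact Or.inl (Set.ncard_empty V)
  · exact ho

lemma OpenMld.pComp_of_permOnL (hL : L.Finite) (ho : OpenMld L l (pDom f))
    (hg : PermOnL L g) : OpenMld L l (pDom (pComp f g)) := by
  rwa [openMld_iff_ncard hL, hg.ncard_inter_pDom_pComp f, ← openMld_iff_ncard hL]

end OpenMld

theorem stmt17_general {V : Type*} (l : ℕ) (hl : 3 ≤ l)
    (L : Set V) (hL : L.ncard = l) :
    let I : Set (V → Option V) := {f | MemW L l f ∧ (imOn f L).ncard ≤ 1}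
    -- I is an ideal of W(l,d):
    (∀ f ∈ I, ∀ g, MemW L l g → pComp g f ∈ I ∧ pComp f g ∈ I) ∧
    -- and I is prime:
    (∀ f g, MemW L l f → MemW L l g → pComp g f ∈ I → f ∈ I ∨ g ∈ I) := by
  intro I
  have hLfin : L.Finite := Set.finite_of_ncard_pos (by omega)
  have hsubsingleton :
      ∀ {f : V → Option V}, (imOn f L).ncard ≤ 1 → (imOn f L).Subsingleton :=
    fun h => (Set.ncard_le_one (hLfin.imOn _)).mp h
  have memI : ∀ {f}, OpenMld L l (pDom f) → (imOn f L).ncard ≤ 1 → f ∈ I :=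
    fun ho h => ⟨⟨ho, Or.inl h⟩, h⟩
  refine ⟨fun f ⟨⟨hfo, _⟩, hf⟩ g ⟨hgo, hg⟩ => ⟨?_, ?_⟩, ?_⟩
  · exact memI (hfo.pComp_of_subsingleton hLfin (hsubsingleton hf) g)
      ((ncard_imOn_pComp_le g f hLfin).trans hf)
  · rcases hg with hg | ⟨-, hg⟩
    · exact memI (hgo.pComp_of_subsingleton hLfin (hsubsingleton hg) f)
        ((ncard_imOn_pComp_le f g hLfin).trans hg)
    · exact memI (hfo.pComp_of_permOnL hLfin hg) (hg.imOn_pComp f ▸ hf)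
  · rintro f g ⟨hfo, hf | ⟨-, hf⟩⟩ ⟨hgo, hg | ⟨-, hg⟩⟩ ⟨-, hgf⟩
    · exact Or.inl (memI hfo hf)
    · exact Or.inl (memI hfo hf)
    · exact Or.inr (memI hgo hg)
    · rw [_root_.imOn_pComp, hf.imOn_eq, hg.imOn_eq, hL] at hgf
      omega

theorem stmt17 {V : Type*} [Fintype V] (l d : ℕ) (hl : 3 ≤ l) (hd : 1 ≤ d)
    (hcard : Fintype.card V = l + d) (L : Set V) (hL : L.ncard = l) :
    let I : Set (V → Option V) := {f | MemW L l f ∧ (imOn f L).ncard ≤ 1}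
    -- I is an ideal of W(l,d):
    (∀ f ∈ I, ∀ g, MemW L l g → pComp g f ∈ I ∧ pComp f g ∈ I) ∧
    -- and I is prime:
    (∀ f g, MemW L l f → MemW L l g → pComp g f ∈ I → f ∈ I ∨ g ∈ I) :=
  stmt17_general l hl L hL
end

section
/- Let l ≥ 3, d ≥ 1, and f ∈ W(l,d), the Wilson monoid of M(l,d). Then f is a regular element (there exists g ∈ W(l,d) with f ∘ g ∘ f = f) if and only if f restricted to L is a permutation of L, or |Im(f) ∩ L| ≤ 1. -/
/-!
`f ∘ g ∘ f = f` exactly when `g` sends every point `y` of `Im f` to a preimage of `y`. The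
witness `g` must also lie in `W(l,d)`: when `f` permutes `L` take the inverse permutation there,
and when `f` hits at most one point `y₀` of `L` send all of `L` to one preimage of `y₀`; in both
cases `L ⊆ Dom g`, so `Dom g` is open. Conversely, if `f` hits two points of `L` but
`|f(L)| ≤ 1`, their preimages `g y₁ ≠ g y₂` force `|g(L)| ≥ 2`, so `g` permutes `L`; but then
both points lie in `f(L)`.
-/

open Set

section PartialFunction

variable {S T : Type*}

open Classical in
noncomputable def pPreimage (f : S → Option T) (A : Set S) (y : T) : Option S :=
  if h : ∃ x ∈ A, f x = some y then some h.choose else none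

theorem pPreimage_spec {f : S → Option T} {A : Set S} {y : T} (h : ∃ x ∈ A, f x = some y) :
    ∃ z ∈ A, pPreimage f A y = some z ∧ f z = some y := by
  classical
  exact ⟨h.choose, h.choose_spec.1, by rw [pPreimage, dif_pos h], h.choose_spec.2⟩

theorem pComp_pComp_eq_self_iff {f : S → Option T} {g : T → Option S} :
    pComp f (pComp g f) = f ↔ ∀ y ∈ pIm f, ∃ z, g y = some z ∧ f z = some y := by
  constructor
  · rintro hfgf y ⟨x, hx⟩
    have hx' := congrFun hfgf x
    cases hz : g y with
    | none => simp [pComp, hx, hz] at hx'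
    | some z => exact ⟨z, rfl, by simpa [pComp, hx, hz] using hx'⟩
  · intro h
    funext x
    cases hx : f x with
    | none => simp [pComp, hx]
    | some y =>
      obtain ⟨z, hz, hfz⟩ := h y ⟨x, hx⟩
      simp [pComp, hx, hz, hfz]

end PartialFunction

section Wilson

variable {V : Type*} {L : Set V} {f g : V → Option V}

theorem openMld_of_subset {l : ℕ} {X : Set V} (hL : L.ncard = l) (hX : L ⊆ X) :
    OpenMld L l X :=
  Or.inr (by rw [inter_eq_self_of_subset_left hX, hL]; omega)

theorem ncard_pIm_inter_le_one_of_regular [Finite V] (hf : (imOn f L).ncard ≤ 1)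
    (hg : (imOn g L).ncard ≤ 1 ∨ PermOnL L g) (hfgf : pComp f (pComp g f) = f) :
    (pIm f ∩ L).ncard ≤ 1 := by
  rw [ncard_le_one]
  rintro y₁ ⟨hy₁, hy₁L⟩ y₂ ⟨hy₂, hy₂L⟩
  obtain ⟨z₁, hgz₁, hfz₁⟩ := pComp_pComp_eq_self_iff.1 hfgf y₁ hy₁
  obtain ⟨z₂, hgz₂, hfz₂⟩ := pComp_pComp_eq_self_iff.1 hfgf y₂ hy₂
  rcases hg with hg | ⟨hgL, -, -⟩
  · obtain rfl : z₁ = z₂ := (ncard_le_one (toFinite _)).1 hg z₁ ⟨y₁, hy₁L, hgz₁⟩ z₂ ⟨y₂, hy₂L, hgz₂⟩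
    exact Option.some.inj (hfz₁.symm.trans hfz₂)
  · obtain ⟨w₁, hw₁L, hw₁⟩ := hgL y₁ hy₁L
    obtain ⟨w₂, hw₂L, hw₂⟩ := hgL y₂ hy₂L
    obtain rfl : z₁ = w₁ := Option.some.inj (hgz₁.symm.trans hw₁)
    obtain rfl : z₂ = w₂ := Option.some.inj (hgz₂.symm.trans hw₂)
    exact (ncard_le_one (toFinite _)).1 hf y₁ ⟨z₁, hw₁L, hfz₁⟩ y₂ ⟨z₂, hw₂L, hfz₂⟩

theorem PermOnL.exists_regular_inverse (hf : PermOnL L f) :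
    ∃ g, L ⊆ pDom g ∧ PermOnL L g ∧ pComp f (pComp g f) = f := by
  classical
  obtain ⟨hmaps, hinj, hsurj⟩ := hf
  set g := L.piecewise (pPreimage f L) (pPreimage f univ)
  have hgL : ∀ y ∈ L, ∃ z ∈ L, g y = some z ∧ f z = some y := fun y hy => by
    simpa only [g, piecewise_eq_of_mem _ _ _ hy] using pPreimage_spec (hsurj y hy)
  refine ⟨g, fun y hy => ?_, ⟨fun y hy => ?_, fun y₁ hy₁ y₂ hy₂ hg => ?_, fun x hx => ?_⟩, ?_⟩
  · obtain ⟨z, -, hz, -⟩ := hgL y hy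
    simp [pDom, hz]
  · obtain ⟨z, hzL, hz, -⟩ := hgL y hy
    exact ⟨z, hzL, hz⟩
  · obtain ⟨z₁, -, hz₁, hfz₁⟩ := hgL y₁ hy₁
    obtain ⟨z₂, -, hz₂, hfz₂⟩ := hgL y₂ hy₂
    obtain rfl : z₁ = z₂ := Option.some.inj (hz₁.symm.trans (hg.trans hz₂))
    exact Option.some.inj (hfz₁.symm.trans hfz₂)
  · obtain ⟨y, hyL, hfx⟩ := hmaps x hx
    obtain ⟨z, hzL, hz, hfz⟩ := hgL y hyL
    exact ⟨y, hyL, hz.trans (congrArg some (hinj z hzL x hx (hfz.trans hfx.symm)))⟩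
  · refine pComp_pComp_eq_self_iff.2 fun y ⟨x, hx⟩ => ?_
    by_cases hy : y ∈ L
    · obtain ⟨z, -, hz⟩ := hgL y hy
      exact ⟨z, hz⟩
    · obtain ⟨z, -, hz⟩ := pPreimage_spec ⟨x, mem_univ x, hx⟩
      exact ⟨z, by simpa only [g, piecewise_eq_of_notMem _ _ _ hy] using hz⟩

theorem exists_regular_inverse_of_ncard_pIm_inter_le_one [Finite V] [Nonempty V]
    (hf : (pIm f ∩ L).ncard ≤ 1) :
    ∃ g, L ⊆ pDom g ∧ (imOn g L).ncard ≤ 1 ∧ pComp f (pComp g f) = f := by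
  classical
  obtain ⟨c, hc⟩ : ∃ c, ∀ y ∈ pIm f ∩ L, f c = some y := by
    rcases (pIm f ∩ L).eq_empty_or_nonempty with h | ⟨y₀, ⟨x₀, hx₀⟩, hy₀L⟩
    · exact ⟨Classical.arbitrary V, by simp [h]⟩
    · exact ⟨x₀, fun y hy => hx₀.trans (congrArg some ((ncard_le_one (toFinite _)).1 hf y₀ ⟨⟨x₀, hx₀⟩, hy₀L⟩ y hy))⟩
  set g := L.piecewise (fun _ => some c) (pPreimage f univ)
  refine ⟨g, fun y hy => by simp [pDom, g, hy], ?_, pComp_pComp_eq_self_iff.2 fun y ⟨x, hx⟩ => ?_⟩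
  · refine (ncard_le_ncard (t := {c}) ?_).trans (ncard_singleton c).le
    rintro z ⟨y, hy, hz⟩
    simpa [g, hy, eq_comm] using hz
  · by_cases hy : y ∈ L
    · exact ⟨c, by simp [g, hy], hc y ⟨⟨x, hx⟩, hy⟩⟩
    · obtain ⟨z, -, hz⟩ := pPreimage_spec ⟨x, mem_univ x, hx⟩
      exact ⟨z, by simpa only [g, piecewise_eq_of_notMem _ _ _ hy] using hz⟩

end Wilson

theorem stmt18_general {V : Type*} [Fintype V] (l : ℕ) (hl : 3 ≤ l)
    (L : Set V) (hL : L.ncard = l)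
    (f : V → Option V) (hf : MemW L l f) :
    (∃ g : V → Option V, MemW L l g ∧ pComp f (pComp g f) = f) ↔
      (PermOnL L f ∨ (pIm f ∩ L).ncard ≤ 1) := by
  constructor
  · rintro ⟨g, hg, hfgf⟩
    rcases hf.2 with him | ⟨-, hperm⟩
    · exact Or.inr (ncard_pIm_inter_le_one_of_regular him (hg.2.imp_right And.right) hfgf)
    · exact Or.inl hperm
  · rintro (hperm | him)
    · obtain ⟨g, hLg, hg, hfgf⟩ := hperm.exists_regular_inverse
      exact ⟨g, ⟨openMld_of_subset hL hLg, Or.inr ⟨hLg, hg⟩⟩, hfgf⟩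
    · have : Nonempty V := (nonempty_of_ncard_ne_zero (s := L) (by omega)).to_type
      obtain ⟨g, hLg, hg, hfgf⟩ := exists_regular_inverse_of_ncard_pIm_inter_le_one him
      exact ⟨g, ⟨openMld_of_subset hL hLg, Or.inl hg⟩, hfgf⟩

theorem stmt18 {V : Type*} [Fintype V] (l d : ℕ) (hl : 3 ≤ l) (hd : 1 ≤ d)
    (hcard : Fintype.card V = l + d) (L : Set V) (hL : L.ncard = l)
    (f : V → Option V) (hf : MemW L l f) :
    (∃ g : V → Option V, MemW L l g ∧ pComp f (pComp g f) = f) ↔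
      (PermOnL L f ∨ (pIm f ∩ L).ncard ≤ 1) :=
  stmt18_general l hl L hL f hf
end
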